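/- arXiv:1009.5640 — 2 statements merged into one kernel-verified Lean document; each statement's English description precedes it below -/
import Mathlib

section
/- Let Ω ⊆ ℝⁿ be open and bounded, q : Ω → ℝ smooth with q > 0 and |∇q| bounded by K := ‖∇q‖_∞. Let λ ∈ ℂ with Re λ < 0 and |Re λ| ≥ C|Im λ| for C large (so that (Re λ)² − (Im λ)² ≥ (Re λ)²/2). Then for every u ∈ C_c^∞(Ω) (or H²₀(Ω) ∩ H⁴), writing T(λ)u = (−Δ − λ(1+m))·(1/m)·(−Δ − λ)u with q = 1/m, one has Re⟨T(λ)u, u⟩ ≥ (1/2 − ε K²)(Re λ)²‖u‖² + (|Re λ| − 1/ε)‖∇u‖² for every ε > 0. -/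
open MeasureTheory Complex

/-- Partial derivative in the `i`-th coordinate direction. -/
noncomputable def pderiv' {n : ℕ} (u : (Fin n → ℝ) → ℂ) (i : Fin n) : (Fin n → ℝ) → ℂ :=
  fun x => fderiv ℝ u x (Pi.single i 1)

/-- The Laplacian `Δu = Σᵢ ∂ᵢ²u`. -/
noncomputable def lap {n : ℕ} (u : (Fin n → ℝ) → ℂ) : (Fin n → ℝ) → ℂ :=
  fun x => ∑ i, pderiv' (pderiv' u i) i x

/-- `P₀ = −Δ`. -/
noncomputable def P0 {n : ℕ} (u : (Fin n → ℝ) → ℂ) : (Fin n → ℝ) → ℂ :=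
  fun x => -lap u x

/-- `T(λ)u = P₀ q P₀ u − λ(q P₀ u + P₀ (q u) + P₀ u) + λ²(1+q)u`, the interior
transmission operator with `q = 1/m`. -/
noncomputable def Tlam {n : ℕ} (q : (Fin n → ℝ) → ℝ) (lam : ℂ) (u : (Fin n → ℝ) → ℂ) :
    (Fin n → ℝ) → ℂ :=
  fun x =>
    P0 (fun y => (q y : ℂ) * P0 u y) x
      - lam * ((q x : ℂ) * P0 u x + P0 (fun y => (q y : ℂ) * u y) x + P0 u x)
      + lam ^ 2 * (((1 : ℝ) + q x : ℝ) * u x)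

variable {n : ℕ}

lemma contDiff_pderiv' {u : (Fin n → ℝ) → ℂ} (hu : ContDiff ℝ (⊤ : ℕ∞) u) (i : Fin n) :
    ContDiff ℝ (⊤ : ℕ∞) (pderiv' u i) :=
  (hu.fderiv_right (by simp)).clm_apply contDiff_const

lemma hcs_pderiv' {u : (Fin n → ℝ) → ℂ} (hu : HasCompactSupport u) (i : Fin n) :
    HasCompactSupport (pderiv' u i) :=
  hu.fderiv_apply ℝ (Pi.single i 1)

lemma tsupport_pderiv' {u : (Fin n → ℝ) → ℂ} (i : Fin n) :
    tsupport (pderiv' u i) ⊆ tsupport u := by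
  apply closure_minimal _ isClosed_closure
  intro x hx
  apply support_fderiv_subset ℝ (f := u)
  simp only [Function.mem_support, pderiv'] at hx ⊢
  intro h
  exact hx (by rw [h]; rfl)

lemma contDiff_lap {u : (Fin n → ℝ) → ℂ} (hu : ContDiff ℝ (⊤ : ℕ∞) u) : ContDiff ℝ (⊤ : ℕ∞) (lap u) :=
  ContDiff.sum fun i _ => contDiff_pderiv' (contDiff_pderiv' hu i) i

lemma contDiff_P0 {u : (Fin n → ℝ) → ℂ} (hu : ContDiff ℝ (⊤ : ℕ∞) u) : ContDiff ℝ (⊤ : ℕ∞) (P0 u) :=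
  (contDiff_lap hu).neg

lemma tsupport_P0 {u : (Fin n → ℝ) → ℂ} : tsupport (P0 u) ⊆ tsupport u := by
  apply closure_minimal _ isClosed_closure
  intro x hx
  simp only [Function.mem_support, P0, lap, neg_eq_zero] at hx
  by_contra h
  apply hx
  rw [neg_eq_zero]
  apply Finset.sum_eq_zero
  intro i _
  have : x ∉ tsupport (pderiv' (pderiv' u i) i) := by
    intro hmem
    exact h (tsupport_pderiv' i (tsupport_pderiv' i hmem))
  exact image_eq_zero_of_notMem_tsupport this

lemma hcs_P0 {u : (Fin n → ℝ) → ℂ} (hu : HasCompactSupport u) : HasCompactSupport (P0 u) :=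
  hu.mono' (subset_trans subset_closure tsupport_P0)

lemma ibp_right {f g : (Fin n → ℝ) → ℂ} (hf : ContDiff ℝ (⊤ : ℕ∞) f) (hg : ContDiff ℝ (⊤ : ℕ∞) g)
    (hsupp : HasCompactSupport g) (i : Fin n) :
    ∫ x, f x * pderiv' g i x = - ∫ x, pderiv' f i x * g x := by
  simp only [pderiv']
  apply integral_mul_fderiv_eq_neg_fderiv_mul_of_integrable
  · exact (((contDiff_pderiv' hf i).continuous.mul hg.continuous).integrable_of_hasCompactSupport
      hsupp.mul_left)
  · exact ((hf.continuous.mul (contDiff_pderiv' hg i).continuous).integrable_of_hasCompactSupport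
      (hcs_pderiv' hsupp i).mul_left)
  · exact ((hf.continuous.mul hg.continuous).integrable_of_hasCompactSupport hsupp.mul_left)
  · exact fun x _ => hf.differentiable (by simp) x
  · exact fun x _ => hg.differentiable (by simp) x

lemma ibp2 {f g : (Fin n → ℝ) → ℂ} (hf : ContDiff ℝ (⊤ : ℕ∞) f) (hg : ContDiff ℝ (⊤ : ℕ∞) g)
    (hsupp : HasCompactSupport g) (i : Fin n) :
    ∫ x, pderiv' (pderiv' f i) i x * g x = ∫ x, f x * pderiv' (pderiv' g i) i x := by
  have h1 : ∫ x, pderiv' f i x * pderiv' g i x = - ∫ x, pderiv' (pderiv' f i) i x * g x :=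
    ibp_right (contDiff_pderiv' hf i) hg hsupp i
  have h2 : ∫ x, f x * pderiv' (pderiv' g i) i x = - ∫ x, pderiv' f i x * pderiv' g i x :=
    ibp_right hf (contDiff_pderiv' hg i) (hcs_pderiv' hsupp i) i
  rw [h2, h1, neg_neg]

lemma P0_swap {f g : (Fin n → ℝ) → ℂ} (hf : ContDiff ℝ (⊤ : ℕ∞) f) (hg : ContDiff ℝ (⊤ : ℕ∞) g)
    (hsupp : HasCompactSupport g) :
    ∫ x, P0 f x * g x = ∫ x, f x * P0 g x := by
  simp only [P0, lap, neg_mul, mul_neg, Finset.sum_mul, Finset.mul_sum]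
  rw [integral_neg, integral_neg, integral_finset_sum, integral_finset_sum]
  · rw [Finset.sum_congr rfl fun i _ => ibp2 hf hg hsupp i]
  · intro i _
    exact ((hf.continuous.mul (contDiff_pderiv' (contDiff_pderiv' hg i) i).continuous
      ).integrable_of_hasCompactSupport (hcs_pderiv' (hcs_pderiv' hsupp i) i).mul_left)
  · intro i _
    exact (((contDiff_pderiv' (contDiff_pderiv' hf i) i).continuous.mul hg.continuous
      ).integrable_of_hasCompactSupport hsupp.mul_left)

lemma pderiv'_conj {u : (Fin n → ℝ) → ℂ} (hu : ContDiff ℝ (⊤ : ℕ∞) u) (i : Fin n)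
    (x : Fin n → ℝ) :
    pderiv' (fun y => (starRingEnd ℂ) (u y)) i x = (starRingEnd ℂ) (pderiv' u i x) := by
  simp only [pderiv']
  have h : HasFDerivAt (fun y => (starRingEnd ℂ) (u y))
      ((Complex.conjCLE.toContinuousLinearMap).comp (fderiv ℝ u x)) x :=
    Complex.conjCLE.toContinuousLinearMap.hasFDerivAt.comp x
      ((hu.differentiable (by simp) x).hasFDerivAt)
  rw [h.fderiv]
  rfl

lemma pderiv'_ofReal {q : (Fin n → ℝ) → ℝ} (hq : ContDiff ℝ (⊤ : ℕ∞) q) (i : Fin n)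
    (x : Fin n → ℝ) :
    pderiv' (fun y => ((q y : ℝ) : ℂ)) i x = ((fderiv ℝ q x (Pi.single i 1) : ℝ) : ℂ) := by
  simp only [pderiv']
  have h : HasFDerivAt (fun y => ((q y : ℝ) : ℂ))
      (Complex.ofRealCLM.comp (fderiv ℝ q x)) x :=
    Complex.ofRealCLM.hasFDerivAt.comp x ((hq.differentiable (by simp) x).hasFDerivAt)
  rw [h.fderiv]
  rfl

lemma pderiv'_mul {f g : (Fin n → ℝ) → ℂ} (hf : ContDiff ℝ (⊤ : ℕ∞) f) (hg : ContDiff ℝ (⊤ : ℕ∞) g)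
    (i : Fin n) (x : Fin n → ℝ) :
    pderiv' (fun y => f y * g y) i x = pderiv' f i x * g x + f x * pderiv' g i x := by
  simp only [pderiv']
  rw [fderiv_fun_mul (hf.differentiable (by simp) x) (hg.differentiable (by simp) x)]
  simp only [ContinuousLinearMap.add_apply, ContinuousLinearMap.smul_apply, smul_eq_mul]
  ring

lemma contDiff_conj {u : (Fin n → ℝ) → ℂ} (hu : ContDiff ℝ (⊤ : ℕ∞) u) :
    ContDiff ℝ (⊤ : ℕ∞) (fun y => (starRingEnd ℂ) (u y)) :=
  Complex.conjCLE.toContinuousLinearMap.contDiff.comp hu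

lemma contDiff_ofReal {q : (Fin n → ℝ) → ℝ} (hq : ContDiff ℝ (⊤ : ℕ∞) q) :
    ContDiff ℝ (⊤ : ℕ∞) (fun y => ((q y : ℝ) : ℂ)) :=
  Complex.ofRealCLM.contDiff.comp hq

lemma P0_conj {u : (Fin n → ℝ) → ℂ} (hu : ContDiff ℝ (⊤ : ℕ∞) u) (x : Fin n → ℝ) :
    P0 (fun y => (starRingEnd ℂ) (u y)) x = (starRingEnd ℂ) (P0 u x) := by
  simp only [P0, lap, map_neg, map_sum]
  congr 1
  apply Finset.sum_congr rfl
  intro i _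
  have h1 : pderiv' (fun y => (starRingEnd ℂ) (u y)) i
      = fun y => (starRingEnd ℂ) (pderiv' u i y) := funext (pderiv'_conj hu i)
  rw [h1, pderiv'_conj (contDiff_pderiv' hu i) i]

section main

variable {q : (Fin n → ℝ) → ℝ} {u : (Fin n → ℝ) → ℂ}

lemma hA_eq (hq : ContDiff ℝ (⊤ : ℕ∞) q) (hu : ContDiff ℝ (⊤ : ℕ∞) u) (husupp : HasCompactSupport u) :
    ∫ x, P0 (fun y => ((q y : ℝ) : ℂ) * P0 u y) x * (starRingEnd ℂ) (u x)
      = ∫ x, ((q x : ℝ) : ℂ) * (P0 u x * (starRingEnd ℂ) (P0 u x)) := by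
  have hv : ContDiff ℝ (⊤ : ℕ∞) (fun y => (starRingEnd ℂ) (u y)) := contDiff_conj hu
  have hvs : HasCompactSupport (fun y => (starRingEnd ℂ) (u y)) :=
    husupp.comp_left (g := starRingEnd ℂ) (map_zero _)
  rw [P0_swap ((contDiff_ofReal hq).mul (contDiff_P0 hu)) hv hvs]
  congr 1
  funext x
  rw [P0_conj hu x, mul_assoc]

lemma hC_eq (hq : ContDiff ℝ (⊤ : ℕ∞) q) (hu : ContDiff ℝ (⊤ : ℕ∞) u) (husupp : HasCompactSupport u) :
    ∫ x, P0 (fun y => ((q y : ℝ) : ℂ) * u y) x * (starRingEnd ℂ) (u x)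
      = ∫ x, ((q x : ℝ) : ℂ) * (u x * (starRingEnd ℂ) (P0 u x)) := by
  have hv : ContDiff ℝ (⊤ : ℕ∞) (fun y => (starRingEnd ℂ) (u y)) := contDiff_conj hu
  have hvs : HasCompactSupport (fun y => (starRingEnd ℂ) (u y)) :=
    husupp.comp_left (g := starRingEnd ℂ) (map_zero _)
  rw [P0_swap ((contDiff_ofReal hq).mul hu) hv hvs]
  congr 1
  funext x
  rw [P0_conj hu x, mul_assoc]

lemma hD_eq (hu : ContDiff ℝ (⊤ : ℕ∞) u) (husupp : HasCompactSupport u) :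
    ∫ x, P0 u x * (starRingEnd ℂ) (u x)
      = ∑ i, ∫ x, pderiv' u i x * (starRingEnd ℂ) (pderiv' u i x) := by
  have hv : ContDiff ℝ (⊤ : ℕ∞) (fun y => (starRingEnd ℂ) (u y)) := contDiff_conj hu
  have hvs : HasCompactSupport (fun y => (starRingEnd ℂ) (u y)) :=
    husupp.comp_left (g := starRingEnd ℂ) (map_zero _)
  simp only [P0, lap, neg_mul, Finset.sum_mul]
  rw [integral_neg, integral_finset_sum]
  · rw [← Finset.sum_neg_distrib]
    apply Finset.sum_congr rfl
    intro i _
    have h1 : ∫ x, pderiv' u i x * pderiv' (fun y => (starRingEnd ℂ) (u y)) i x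
        = - ∫ x, pderiv' (pderiv' u i) i x * (starRingEnd ℂ) (u x) :=
      ibp_right (contDiff_pderiv' hu i) hv hvs i
    rw [← neg_eq_iff_eq_neg.mpr h1, neg_neg]
    congr 1
    funext x
    rw [pderiv'_conj hu i x]
  · intro i _
    exact (((contDiff_pderiv' (contDiff_pderiv' hu i) i).continuous.mul
      hv.continuous).integrable_of_hasCompactSupport hvs.mul_left)


lemma hB_eq (hq : ContDiff ℝ (⊤ : ℕ∞) q) (hu : ContDiff ℝ (⊤ : ℕ∞) u) (husupp : HasCompactSupport u) :
    ∫ x, (((q x : ℝ) : ℂ) * P0 u x) * (starRingEnd ℂ) (u x)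
      = (∑ i, ∫ x, ((fderiv ℝ q x (Pi.single i 1) : ℝ) : ℂ)
            * (pderiv' u i x * (starRingEnd ℂ) (u x)))
        + ∑ i, ∫ x, ((q x : ℝ) : ℂ)
            * (pderiv' u i x * (starRingEnd ℂ) (pderiv' u i x)) := by
  have hv : ContDiff ℝ (⊤ : ℕ∞) (fun y => (starRingEnd ℂ) (u y)) := contDiff_conj hu
  have hvs : HasCompactSupport (fun y => (starRingEnd ℂ) (u y)) :=
    husupp.comp_left (g := starRingEnd ℂ) (map_zero _)
  have hg : ContDiff ℝ (⊤ : ℕ∞) (fun y => ((q y : ℝ) : ℂ) * (starRingEnd ℂ) (u y)) :=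
    (contDiff_ofReal hq).mul hv
  have hgs : HasCompactSupport (fun y => ((q y : ℝ) : ℂ) * (starRingEnd ℂ) (u y)) :=
    HasCompactSupport.mul_left hvs
  have step0 : (∫ x, (((q x : ℝ) : ℂ) * P0 u x) * (starRingEnd ℂ) (u x))
      = ∫ x, P0 u x * (((q x : ℝ) : ℂ) * (starRingEnd ℂ) (u x)) := by
    congr 1; funext x; ring
  rw [step0]
  simp only [P0, lap, neg_mul, Finset.sum_mul]
  rw [integral_neg, integral_finset_sum]
  · have key : ∀ i : Fin n,
        (∫ x, pderiv' (pderiv' u i) i x * (((q x : ℝ) : ℂ) * (starRingEnd ℂ) (u x)))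
          = -((∫ x, ((fderiv ℝ q x (Pi.single i 1) : ℝ) : ℂ)
                * (pderiv' u i x * (starRingEnd ℂ) (u x)))
            + ∫ x, ((q x : ℝ) : ℂ)
                * (pderiv' u i x * (starRingEnd ℂ) (pderiv' u i x))) := by
      intro i
      have h1 : ∫ x, pderiv' u i x
            * pderiv' (fun y => ((q y : ℝ) : ℂ) * (starRingEnd ℂ) (u y)) i x
          = - ∫ x, pderiv' (pderiv' u i) i x * (((q x : ℝ) : ℂ) * (starRingEnd ℂ) (u x)) :=
        ibp_right (contDiff_pderiv' hu i) hg hgs i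
      rw [← neg_eq_iff_eq_neg.mpr h1]
      congr 1
      have h2 : (fun x => pderiv' u i x
            * pderiv' (fun y => ((q y : ℝ) : ℂ) * (starRingEnd ℂ) (u y)) i x)
          = fun x => ((fderiv ℝ q x (Pi.single i 1) : ℝ) : ℂ)
                * (pderiv' u i x * (starRingEnd ℂ) (u x))
              + ((q x : ℝ) : ℂ) * (pderiv' u i x * (starRingEnd ℂ) (pderiv' u i x)) := by
        funext x
        rw [pderiv'_mul (contDiff_ofReal hq) hv i x, pderiv'_ofReal hq i x,
          pderiv'_conj hu i x]
        ring
      rw [h2]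
      apply integral_add
      · exact (((contDiff_ofReal ((hq.fderiv_right (by simp)).clm_apply contDiff_const)
          ).continuous.mul ((contDiff_pderiv' hu i).continuous.mul
          hv.continuous)).integrable_of_hasCompactSupport
          ((hcs_pderiv' husupp i).mul_right).mul_left)
      · exact (((contDiff_ofReal hq).continuous.mul ((contDiff_pderiv' hu i).continuous.mul
          (contDiff_conj (contDiff_pderiv' hu i)).continuous)).integrable_of_hasCompactSupport
          ((hcs_pderiv' husupp i).mul_right).mul_left)
    rw [Finset.sum_congr rfl fun i _ => key i]
    rw [Finset.sum_neg_distrib, neg_neg, Finset.sum_add_distrib]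
  · intro i _
    exact (((contDiff_pderiv' (contDiff_pderiv' hu i) i).continuous.mul
      hg.continuous).integrable_of_hasCompactSupport hgs.mul_left)


lemma key_pointwise {ι : Type*} [Fintype ι] (ε c K : ℝ) (hε : 0 < ε) (hc : 0 ≤ c)
    (d : ι → ℝ) (z : ι → ℂ) (a : ℂ) (hK : Real.sqrt (∑ i, (d i) ^ 2) ≤ K) :
    -(ε * c ^ 2 * K ^ 2 * ‖a‖ ^ 2 + (1 / ε) * ∑ i, ‖z i‖ ^ 2)
      ≤ 2 * c * (∑ i, ((d i : ℂ) * (z i * (starRingEnd ℂ) a))).re := by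
  set w : ℂ := ∑ i, ((d i : ℂ) * (z i * (starRingEnd ℂ) a)) with hw
  set S : ℝ := ∑ i, ‖z i‖ ^ 2 with hS
  set s : ℝ := Real.sqrt S with hs
  set r : ℝ := ‖a‖ with hr
  have hK0 : 0 ≤ K := le_trans (Real.sqrt_nonneg _) hK
  have hS0 : 0 ≤ S := Finset.sum_nonneg fun i _ => sq_nonneg _
  have hs2 : s ^ 2 = S := Real.sq_sqrt hS0
  have habs : ‖w‖ ≤ K * s * r := by
    calc ‖w‖ ≤ ∑ i, ‖(d i : ℂ) * (z i * (starRingEnd ℂ) a)‖ :=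
          norm_sum_le _ _
      _ = ∑ i, |d i| * ‖z i‖ * r := by
          apply Finset.sum_congr rfl; intro i _
          simp [map_mul, Complex.norm_real, mul_assoc, hr]
      _ = (∑ i, |d i| * ‖z i‖) * r := by rw [Finset.sum_mul]
      _ ≤ (K * s) * r := by
          apply mul_le_mul_of_nonneg_right _ (norm_nonneg a)
          have hcs : (∑ i, |d i| * ‖z i‖) ^ 2
              ≤ (∑ i, (d i) ^ 2) * S := by
            have := Finset.sum_mul_sq_le_sq_mul_sq Finset.univ
              (fun i => |d i|) (fun i => ‖z i‖)
            simpa [sq_abs, Complex.sq_norm, hS] using this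
          have h1 : (∑ i, |d i| * ‖z i‖) ≤
              Real.sqrt ((∑ i, (d i) ^ 2) * S) := by
            rw [← Real.sqrt_sq (Finset.sum_nonneg fun i _ =>
              mul_nonneg (abs_nonneg _) (norm_nonneg _))]
            exact Real.sqrt_le_sqrt hcs
          calc (∑ i, |d i| * ‖z i‖)
              ≤ Real.sqrt ((∑ i, (d i) ^ 2) * S) := h1
            _ = Real.sqrt (∑ i, (d i) ^ 2) * s := Real.sqrt_mul
                (Finset.sum_nonneg fun i _ => sq_nonneg _) _
            _ ≤ K * s := mul_le_mul_of_nonneg_right hK (Real.sqrt_nonneg _)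
  have hre : -(K * s * r) ≤ w.re := by
    have h1 : |w.re| ≤ ‖w‖ := Complex.abs_re_le_norm w
    have h2 := abs_le.mp (h1.trans habs)
    linarith [h2.1]
  have hyoung : 0 ≤ (1 / ε) * (ε * c * K * r - s) ^ 2 :=
    mul_nonneg (by positivity) (sq_nonneg _)
  have hr0 : 0 ≤ r := norm_nonneg a
  have hs0 : 0 ≤ s := Real.sqrt_nonneg _
  have h2 : -(2 * c * (K * s * r)) ≤ 2 * c * w.re := by
    have := mul_le_mul_of_nonneg_left hre (by linarith : (0:ℝ) ≤ 2 * c)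
    linarith [this]
  have hfield : (1 / ε) * (ε * c * K * r - s) ^ 2
      = ε * c ^ 2 * K ^ 2 * r ^ 2 - 2 * c * K * r * s + (1 / ε) * s ^ 2 := by
    field_simp
    ring
  have hSs : (1 / ε) * S = (1 / ε) * s ^ 2 := by rw [hs2]
  linarith [hyoung, h2, hfield, hSs]

end main

set_option maxHeartbeats 1000000 in
/-- Coercivity estimate on the left half-plane: for `Re λ < 0` with
`(Im λ)² ≤ (Re λ)²/2`, smooth `q > 0` with `‖∇q‖_∞ ≤ K`, and every `u` smooth and
compactly supported in `Ω`, and every `ε > 0`,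
`Re⟨T(λ)u, u⟩ ≥ (1/2 − εK²)(Re λ)²‖u‖² + (|Re λ| − 1/ε)‖∇u‖²`. -/
theorem left_halfplane_coercivity {n : ℕ} (Ω : Set (Fin n → ℝ)) (hΩo : IsOpen Ω)
    (hΩb : Bornology.IsBounded Ω) (q : (Fin n → ℝ) → ℝ) (hq : ContDiff ℝ (⊤ : ℕ∞) q)
    (hqpos : ∀ x ∈ Ω, 0 < q x) (K : ℝ)
    (hK : ∀ x ∈ Ω, Real.sqrt (∑ i, (fderiv ℝ q x (Pi.single i 1)) ^ 2) ≤ K)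
    (lam : ℂ) (hre : lam.re < 0) (him : lam.im ^ 2 ≤ lam.re ^ 2 / 2)
    (u : (Fin n → ℝ) → ℂ) (hu : ContDiff ℝ (⊤ : ℕ∞) u) (husupp : HasCompactSupport u)
    (huΩ : tsupport u ⊆ Ω) (ε : ℝ) (hε : 0 < ε) :
    (1 / 2 - ε * K ^ 2) * lam.re ^ 2 * (∫ x in Ω, ‖u x‖ ^ 2)
        + (|lam.re| - 1 / ε) * (∫ x in Ω, ∑ i, ‖pderiv' u i x‖ ^ 2)
      ≤ (∫ x in Ω, Tlam q lam u x * (starRingEnd ℂ) (u x)).re := by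
  have hv : ContDiff ℝ (⊤ : ℕ∞) (fun y => (starRingEnd ℂ) (u y)) := contDiff_conj hu
  have hvs : HasCompactSupport (fun y => (starRingEnd ℂ) (u y)) :=
    husupp.comp_left (g := starRingEnd ℂ) (map_zero _)
  have hts0 : ∀ x, x ∉ tsupport u → u x = 0 := fun x hx => image_eq_zero_of_notMem_tsupport hx
  have htsd0 : ∀ (i : Fin n) x, x ∉ tsupport u → pderiv' u i x = 0 := fun i x hx =>
    image_eq_zero_of_notMem_tsupport (fun h => hx (tsupport_pderiv' i h))
  have hux0 : ∀ x, x ∉ Ω → u x = 0 := fun x hx => hts0 x (fun h => hx (huΩ h))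
  have hdux0 : ∀ (i : Fin n) x, x ∉ Ω → pderiv' u i x = 0 := fun i x hx =>
    htsd0 i x (fun h => hx (huΩ h))
  -- integrability of the basic real integrands
  have Int_u2 : Integrable (fun x => ‖u x‖ ^ 2) :=
    ((continuous_norm.comp hu.continuous).pow 2).integrable_of_hasCompactSupport
      (husupp.comp_left (g := fun z => ‖z‖ ^ 2) (by simp) :)
  have Int_du2 : ∀ i : Fin n, Integrable (fun x => ‖pderiv' u i x‖ ^ 2) := fun i =>
    ((continuous_norm.comp (contDiff_pderiv' hu i).continuous).pow 2
      ).integrable_of_hasCompactSupport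
      ((hcs_pderiv' husupp i).comp_left (g := fun z => ‖z‖ ^ 2) (by simp) :)
  have Int_sum : Integrable (fun x => ∑ i, ‖pderiv' u i x‖ ^ 2) :=
    integrable_finset_sum _ (fun i _ => Int_du2 i)
  -- abbreviations
  set Iu : ℝ := ∫ x, ‖u x‖ ^ 2 with hIu_def
  set Id : ℝ := ∫ x, ∑ i, ‖pderiv' u i x‖ ^ 2 with hId_def
  set e' : ℝ := ∫ x, (1 + q x) * ‖u x‖ ^ 2 with he'_def
  set b1 : ℝ := ∫ x, q x * ∑ i, ‖pderiv' u i x‖ ^ 2 with hb1_def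
  set W : ℂ := ∑ i, ∫ x, ((fderiv ℝ q x (Pi.single i 1) : ℝ) : ℂ)
      * (pderiv' u i x * (starRingEnd ℂ) (u x)) with hW_def
  -- reduce set integrals to full integrals
  have hΩ1 : (∫ x in Ω, ‖u x‖ ^ 2) = Iu :=
    setIntegral_eq_integral_of_forall_compl_eq_zero fun x hx => by rw [hux0 x hx]; simp
  have hΩ2 : (∫ x in Ω, ∑ i, ‖pderiv' u i x‖ ^ 2) = Id :=
    setIntegral_eq_integral_of_forall_compl_eq_zero fun x hx =>
      Finset.sum_eq_zero fun i _ => by rw [hdux0 i x hx]; simp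
  have hΩ3 : (∫ x in Ω, Tlam q lam u x * (starRingEnd ℂ) (u x))
      = ∫ x, Tlam q lam u x * (starRingEnd ℂ) (u x) :=
    setIntegral_eq_integral_of_forall_compl_eq_zero fun x hx => by rw [hux0 x hx]; simp
  rw [hΩ1, hΩ2, hΩ3, abs_of_neg hre]
  -- integrability of the complex integrands
  have mk : ∀ f : (Fin n → ℝ) → ℂ, Continuous f →
      Integrable (fun x => f x * (starRingEnd ℂ) (u x)) := fun f hf =>
    (hf.mul hv.continuous).integrable_of_hasCompactSupport hvs.mul_left
  have I1 : Integrable (fun x => P0 (fun y => ((q y : ℝ) : ℂ) * P0 u y) x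
      * (starRingEnd ℂ) (u x)) :=
    mk _ (contDiff_P0 ((contDiff_ofReal hq).mul (contDiff_P0 hu))).continuous
  have I2 : Integrable (fun x => (((q x : ℝ) : ℂ) * P0 u x) * (starRingEnd ℂ) (u x)) :=
    mk _ ((contDiff_ofReal hq).mul (contDiff_P0 hu)).continuous
  have I3 : Integrable (fun x => P0 (fun y => ((q y : ℝ) : ℂ) * u y) x
      * (starRingEnd ℂ) (u x)) :=
    mk _ (contDiff_P0 ((contDiff_ofReal hq).mul hu)).continuous
  have I4 : Integrable (fun x => P0 u x * (starRingEnd ℂ) (u x)) :=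
    mk _ (contDiff_P0 hu).continuous
  have I5 : Integrable (fun x => ((((1 : ℝ) + q x : ℝ) : ℂ) * u x)
      * (starRingEnd ℂ) (u x)) :=
    mk _ ((contDiff_ofReal (contDiff_const.add hq)).mul hu).continuous
  -- split the integral
  have hfun : (fun x => Tlam q lam u x * (starRingEnd ℂ) (u x))
      = fun x => (P0 (fun y => ((q y : ℝ) : ℂ) * P0 u y) x * (starRingEnd ℂ) (u x)
          - lam * ((((q x : ℝ) : ℂ) * P0 u x) * (starRingEnd ℂ) (u x)
            + P0 (fun y => ((q y : ℝ) : ℂ) * u y) x * (starRingEnd ℂ) (u x)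
            + P0 u x * (starRingEnd ℂ) (u x)))
          + lam ^ 2 * (((((1 : ℝ) + q x : ℝ) : ℂ) * u x) * (starRingEnd ℂ) (u x)) := by
    funext x; simp only [Tlam]; ring
  have IBCD : Integrable (fun x => (((q x : ℝ) : ℂ) * P0 u x) * (starRingEnd ℂ) (u x)
      + P0 (fun y => ((q y : ℝ) : ℂ) * u y) x * (starRingEnd ℂ) (u x)
      + P0 u x * (starRingEnd ℂ) (u x)) := by exact (I2.add I3).add I4
  have IBC : Integrable (fun x => (((q x : ℝ) : ℂ) * P0 u x) * (starRingEnd ℂ) (u x)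
      + P0 (fun y => ((q y : ℝ) : ℂ) * u y) x * (starRingEnd ℂ) (u x)) := by exact I2.add I3
  have ILHS : Integrable (fun x => P0 (fun y => ((q y : ℝ) : ℂ) * P0 u y) x
      * (starRingEnd ℂ) (u x)
      - lam * ((((q x : ℝ) : ℂ) * P0 u x) * (starRingEnd ℂ) (u x)
        + P0 (fun y => ((q y : ℝ) : ℂ) * u y) x * (starRingEnd ℂ) (u x)
        + P0 u x * (starRingEnd ℂ) (u x))) := by exact I1.sub (IBCD.const_mul lam)
  have hsplit : (∫ x, Tlam q lam u x * (starRingEnd ℂ) (u x))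
      = (∫ x, P0 (fun y => ((q y : ℝ) : ℂ) * P0 u y) x * (starRingEnd ℂ) (u x))
        - lam * ((∫ x, (((q x : ℝ) : ℂ) * P0 u x) * (starRingEnd ℂ) (u x))
          + (∫ x, P0 (fun y => ((q y : ℝ) : ℂ) * u y) x * (starRingEnd ℂ) (u x))
          + (∫ x, P0 u x * (starRingEnd ℂ) (u x)))
        + lam ^ 2 * (∫ x, ((((1 : ℝ) + q x : ℝ) : ℂ) * u x) * (starRingEnd ℂ) (u x)) := by
    rw [hfun, integral_add ILHS (I5.const_mul (lam ^ 2)),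
      integral_sub I1 (IBCD.const_mul lam),
      integral_const_mul, integral_const_mul, integral_add IBC I4,
      integral_add I2 I3]
  -- values of the pieces
  have ofReal_trick : ∀ (f : (Fin n → ℝ) → ℝ) (g : (Fin n → ℝ) → ℂ),
      (∀ x, g x = ((f x : ℝ) : ℂ)) → (∫ x, g x) = ((∫ x, f x : ℝ) : ℂ) := by
    intro f g h
    rw [show (fun x => g x) = fun x => ((f x : ℝ) : ℂ) from funext h]
    exact integral_ofReal
  have hDval : (∫ x, P0 u x * (starRingEnd ℂ) (u x)) = ((Id : ℝ) : ℂ) := by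
    rw [hD_eq hu husupp]
    have h1 : ∀ i : Fin n, (∫ x, pderiv' u i x * (starRingEnd ℂ) (pderiv' u i x))
        = ((∫ x, ‖pderiv' u i x‖ ^ 2 : ℝ) : ℂ) := fun i =>
      ofReal_trick _ _ fun x => by rw [Complex.mul_conj, ← Complex.sq_norm]
    rw [Finset.sum_congr rfl fun i _ => h1 i, ← Complex.ofReal_sum]
    rw [hId_def, ← integral_finset_sum _ (fun i _ => Int_du2 i)]
  have hEval : (∫ x, ((((1 : ℝ) + q x : ℝ) : ℂ) * u x) * (starRingEnd ℂ) (u x))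
      = ((e' : ℝ) : ℂ) := by
    rw [he'_def]
    exact ofReal_trick _ _ fun x => by
      rw [mul_assoc, Complex.mul_conj, ← Complex.sq_norm]; push_cast; ring
  have hAval : (∫ x, P0 (fun y => ((q y : ℝ) : ℂ) * P0 u y) x * (starRingEnd ℂ) (u x))
      = ((∫ x, q x * ‖P0 u x‖ ^ 2 : ℝ) : ℂ) := by
    rw [hA_eq hq hu husupp]
    exact ofReal_trick _ _ fun x => by
      rw [Complex.mul_conj, ← Complex.sq_norm]; push_cast; ring
  have hBval : (∫ x, (((q x : ℝ) : ℂ) * P0 u x) * (starRingEnd ℂ) (u x))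
      = W + ((b1 : ℝ) : ℂ) := by
    rw [hB_eq hq hu husupp, hW_def]
    congr 1
    have h1 : ∀ i : Fin n, (∫ x, ((q x : ℝ) : ℂ)
        * (pderiv' u i x * (starRingEnd ℂ) (pderiv' u i x)))
        = ((∫ x, q x * ‖pderiv' u i x‖ ^ 2 : ℝ) : ℂ) := fun i =>
      ofReal_trick _ _ fun x => by
        rw [Complex.mul_conj, ← Complex.sq_norm]; push_cast; ring
    rw [Finset.sum_congr rfl fun i _ => h1 i, ← Complex.ofReal_sum]
    congr 1
    have Int_qdu2 : ∀ i : Fin n, Integrable (fun x => q x * ‖pderiv' u i x‖ ^ 2) :=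
      fun i => (hq.continuous.mul ((continuous_norm.comp
        (contDiff_pderiv' hu i).continuous).pow 2)).integrable_of_hasCompactSupport
        (HasCompactSupport.mul_left
          ((hcs_pderiv' husupp i).comp_left (g := fun z => ‖z‖ ^ 2) (by simp) :))
    rw [hb1_def, ← integral_finset_sum _ (fun i _ => Int_qdu2 i)]
    congr 1; funext x; rw [← Finset.mul_sum]
  -- C = conj B
  have hCB : (∫ x, P0 (fun y => ((q y : ℝ) : ℂ) * u y) x * (starRingEnd ℂ) (u x))
      = (starRingEnd ℂ) (∫ x, (((q x : ℝ) : ℂ) * P0 u x) * (starRingEnd ℂ) (u x)) := by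
    rw [hC_eq hq hu husupp, ← integral_conj]
    congr 1; funext x
    simp only [map_mul, Complex.conj_conj, Complex.conj_ofReal]
    ring
  have hAre : (0:ℝ) ≤ ∫ x, q x * ‖P0 u x‖ ^ 2 := by
    apply integral_nonneg
    intro x
    by_cases hx : P0 u x = 0
    · simp [hx]
    · have hxΩ : x ∈ Ω := huΩ (tsupport_P0 (subset_closure (Function.mem_support.mpr hx)))
      have := hqpos x hxΩ
      positivity
  have hb1nn : (0:ℝ) ≤ b1 := by
    rw [hb1_def]
    apply integral_nonneg
    intro x
    dsimp only
    by_cases hx : x ∈ tsupport u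
    · exact mul_nonneg (hqpos x (huΩ hx)).le (Finset.sum_nonneg fun i _ => sq_nonneg _)
    · have h0i : ∀ i, pderiv' u i x = 0 := fun i => htsd0 i x hx
      simp [h0i]
  have hIu0 : (0:ℝ) ≤ Iu := integral_nonneg fun x => sq_nonneg _
  have hId0 : (0:ℝ) ≤ Id :=
    integral_nonneg fun x => Finset.sum_nonneg fun i _ => sq_nonneg _
  have Int_e : Integrable (fun x => (1 + q x) * ‖u x‖ ^ 2) :=
    ((contDiff_const.add hq).continuous.mul
      ((continuous_norm.comp hu.continuous).pow 2)).integrable_of_hasCompactSupport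
      (HasCompactSupport.mul_left
        (husupp.comp_left (g := fun z => ‖z‖ ^ 2) (by simp) :))
  have hIue : Iu ≤ e' := by
    rw [hIu_def, he'_def]
    apply integral_mono Int_u2 Int_e
    intro x
    dsimp only
    by_cases hx : u x = 0
    · simp [hx]
    · have hxΩ : x ∈ Ω := huΩ (subset_closure (Function.mem_support.mpr hx))
      have hq0 := hqpos x hxΩ
      nlinarith [mul_nonneg hq0.le (sq_nonneg (‖u x‖))]
  -- the W bound
  have IntW : ∀ i : Fin n, Integrable (fun x => ((fderiv ℝ q x (Pi.single i 1) : ℝ) : ℂ)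
      * (pderiv' u i x * (starRingEnd ℂ) (u x))) := fun i =>
    ((contDiff_ofReal ((hq.fderiv_right (by simp)).clm_apply contDiff_const)).continuous.mul
      ((contDiff_pderiv' hu i).continuous.mul hv.continuous)).integrable_of_hasCompactSupport
      (HasCompactSupport.mul_left hvs.mul_left)
  have IntWre : ∀ i : Fin n, Integrable (fun x => (((fderiv ℝ q x (Pi.single i 1) : ℝ) : ℂ)
      * (pderiv' u i x * (starRingEnd ℂ) (u x))).re) := fun i =>
    (Complex.continuous_re.comp (((contDiff_ofReal ((hq.fderiv_right (by simp)).clm_apply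
      contDiff_const)).continuous.mul ((contDiff_pderiv' hu i).continuous.mul
      hv.continuous)))).integrable_of_hasCompactSupport
      ((HasCompactSupport.mul_left hvs.mul_left).comp_left (g := Complex.re) rfl)
  have hWre : W.re = ∫ x, ∑ i, (((fderiv ℝ q x (Pi.single i 1) : ℝ) : ℂ)
      * (pderiv' u i x * (starRingEnd ℂ) (u x))).re := by
    rw [hW_def, Complex.re_sum, integral_finset_sum _ (fun i _ => IntWre i)]
    apply Finset.sum_congr rfl
    intro i _
    have := integral_re (IntW i)
    simpa using this.symm
  have hWb : -(ε * lam.re ^ 2 * K ^ 2 * Iu + (1 / ε) * Id) ≤ 2 * (-lam.re) * W.re := by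
    have heq : 2 * (-lam.re) * W.re = ∫ x, 2 * (-lam.re)
        * ∑ i, (((fderiv ℝ q x (Pi.single i 1) : ℝ) : ℂ)
          * (pderiv' u i x * (starRingEnd ℂ) (u x))).re := by
      rw [hWre, ← integral_const_mul]
    have hsum : ε * lam.re ^ 2 * K ^ 2 * Iu + (1 / ε) * Id
        = ∫ x, (ε * lam.re ^ 2 * K ^ 2 * ‖u x‖ ^ 2
          + (1 / ε) * ∑ i, ‖pderiv' u i x‖ ^ 2) := by
      rw [integral_add (Int_u2.const_mul _) (Int_sum.const_mul _),
        integral_const_mul, integral_const_mul]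
    rw [heq, hsum, ← integral_neg]
    apply integral_mono ((Int_u2.const_mul _).add (Int_sum.const_mul _)).neg
      ((integrable_finset_sum _ fun i _ => IntWre i).const_mul _)
    intro x
    dsimp only
    by_cases hx : x ∈ tsupport u
    · have h := key_pointwise ε (-lam.re) K hε (by linarith)
        (fun i => fderiv ℝ q x (Pi.single i 1)) (fun i => pderiv' u i x) (u x)
        (hK x (huΩ hx))
      simpa [Complex.re_sum, neg_sq] using h
    · have h0 : u x = 0 := hts0 x hx
      have h0i : ∀ i, pderiv' u i x = 0 := fun i => htsd0 i x hx
      simp [h0, h0i]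
  -- real part of the full integral
  have hJ : (∫ x, Tlam q lam u x * (starRingEnd ℂ) (u x)).re
      = (∫ x, q x * ‖P0 u x‖ ^ 2)
        - lam.re * (2 * (W.re + b1) + Id) + (lam.re ^ 2 - lam.im ^ 2) * e' := by
    rw [hsplit, hAval, hCB, hBval, hDval, hEval]
    simp only [map_add, Complex.conj_ofReal, Complex.add_re, Complex.sub_re, Complex.mul_re,
      Complex.add_im, Complex.mul_im, Complex.ofReal_re, Complex.ofReal_im, Complex.conj_re,
      Complex.conj_im, pow_two]
    ring
  have hE2 : lam.re ^ 2 / 2 * Iu ≤ (lam.re ^ 2 - lam.im ^ 2) * e' := by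
    have h1 : lam.re ^ 2 / 2 ≤ lam.re ^ 2 - lam.im ^ 2 := by linarith
    have h2 : (0:ℝ) ≤ lam.re ^ 2 - lam.im ^ 2 := by linarith [sq_nonneg lam.im]
    exact mul_le_mul h1 hIue hIu0 h2
  have hb1' : (0:ℝ) ≤ (-lam.re) * b1 := mul_nonneg (by linarith) hb1nn
  rw [hJ]
  nlinarith [hWb, hAre, hb1', hE2, hId0, hIu0]
end

section
/- Let z ∈ ℂ with |z| ≤ C₀ and Im z ≥ h^{δ/2} with 0 < h ≤ 1, 0 ≤ δ < 1/2, let q ∈ [q₋, q₊] with 0 < q₋ ≤ q₊, and s ≥ 0. Define σ₁ = √(z−s), σ₂ = √(((q+1)/q)z − s) (positive imaginary part branch). Then there exists C > 0 depending only on C₀, q₋, q₊ such that: (i) for s ≥ 2(1+1/q₋)C₀, |det a| = |σ₂−σ₁|²/|t₀'(σ₁)t₀'(σ₂)| satisfies |det a| ≥ (1/C)(1+s)^{−2}; (ii) for s ≤ 2(1+1/q₋)C₀, |det a| ≥ 1/C. Here t₀'(σ₁) = −2σ₁z, t₀'(σ₂) = 2σ₂z. -/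
/-!
Since `σ₂² - σ₁² = z / q`, the factor `|σ₂ - σ₁|² = |z|² / (q² |σ₁ + σ₂|²)` cancels the `|z|²`
of the denominator, leaving `|det a| = 1 / (4 q² |σ₁ + σ₂|² |σ₁| |σ₂|)`. Both `|σⱼ|²` are at most
`(1 + 1/q) |z| + s ≤ K + s` with `K = (1 + 1/qmin) C₀`, so `|det a| ≥ 1 / (16 qmax² (K + s)²)`,
which is `≳ (1 + s)⁻²` for all `s` and bounded below for bounded `s`.
-/

open Complex

theorem norm_add_sq_mul_norm_mul_norm_le {E : Type*} [SeminormedAddCommGroup E] {a b : E} {R : ℝ}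
    (ha : ‖a‖ ^ 2 ≤ R) (hb : ‖b‖ ^ 2 ≤ R) : ‖a + b‖ ^ 2 * (‖a‖ * ‖b‖) ≤ 4 * R ^ 2 := by
  have hab : ‖a‖ * ‖b‖ ≤ R := by nlinarith [sq_nonneg (‖a‖ - ‖b‖)]
  have hsum : ‖a + b‖ ^ 2 ≤ 4 * R := by
    nlinarith [norm_add_le a b, norm_nonneg (a + b), sq_nonneg (‖a‖ - ‖b‖)]
  calc ‖a + b‖ ^ 2 * (‖a‖ * ‖b‖) ≤ 4 * R * R := by
        gcongr; nlinarith [sq_nonneg ‖a‖]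
    _ = 4 * R ^ 2 := by ring

theorem Complex.norm_sq_le_of_sq_eq_sub_ofReal {σ w : ℂ} {s : ℝ} (h : σ ^ 2 = w - s) (hs : 0 ≤ s) :
    ‖σ‖ ^ 2 ≤ ‖w‖ + s := by
  calc ‖σ‖ ^ 2 = ‖w - s‖ := by rw [← norm_pow, h]
    _ ≤ ‖w‖ + ‖(s : ℂ)‖ := norm_sub_le _ _
    _ = ‖w‖ + s := by rw [norm_real, Real.norm_of_nonneg hs]

theorem norm_sub_sq_div_norm_mul_eq {σ₁ σ₂ z c : ℂ} (h : (σ₂ ^ 2 - σ₁ ^ 2) * c = z)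
    (hz : z ≠ 0) :
    ‖σ₂ - σ₁‖ ^ 2 / ‖(-2 * σ₁ * z) * (2 * σ₂ * z)‖
      = 1 / (4 * ‖c‖ ^ 2 * ‖σ₁ + σ₂‖ ^ 2 * (‖σ₁‖ * ‖σ₂‖)) := by
  have hnorm : ‖σ₂ - σ₁‖ * (‖σ₁ + σ₂‖ * ‖c‖) = ‖z‖ := by
    rw [← h, show σ₂ ^ 2 - σ₁ ^ 2 = (σ₂ - σ₁) * (σ₁ + σ₂) by ring]
    simp only [norm_mul, mul_assoc]
  have hD : ‖σ₂ - σ₁‖ ^ 2 ≠ 0 := by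
    intro h0
    rw [pow_eq_zero_iff two_ne_zero] at h0
    exact hz (norm_eq_zero.mp (by rw [← hnorm, h0, zero_mul]))
  have hden : ‖(-2 * σ₁ * z) * (2 * σ₂ * z)‖
      = ‖σ₂ - σ₁‖ ^ 2 * (4 * ‖c‖ ^ 2 * ‖σ₁ + σ₂‖ ^ 2 * (‖σ₁‖ * ‖σ₂‖)) := by
    simp only [norm_mul, norm_neg, ← hnorm]
    norm_num
    ring
  rw [hden, div_mul_cancel_left₀ hD, one_div]

theorem boundary_det_lower_bound {z σ₁ σ₂ : ℂ} {q s : ℝ} (hq : 0 < q) (hs : 0 ≤ s) (hz : z ≠ 0)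
    (hσ₁ : σ₁ ≠ 0) (hσ₂ : σ₂ ≠ 0) (h₁ : σ₁ ^ 2 = z - s)
    (h₂ : σ₂ ^ 2 = ((q + 1) / q : ℝ) * z - s) :
    1 / (16 * q ^ 2 * ((q + 1) / q * ‖z‖ + s) ^ 2)
      ≤ ‖σ₂ - σ₁‖ ^ 2 / ‖(-2 * σ₁ * z) * (2 * σ₂ * z)‖ := by
  have hdiff : (σ₂ ^ 2 - σ₁ ^ 2) * q = z := by
    have hq' : (q : ℂ) ≠ 0 := ofReal_ne_zero.mpr hq.ne'
    rw [h₁, h₂]; push_cast; field_simp; ring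
  have hsum : σ₁ + σ₂ ≠ 0 := by
    rintro h0; apply hz; rw [← hdiff, show σ₂ = -σ₁ by linear_combination h0]; ring
  have hR₁ : ‖σ₁‖ ^ 2 ≤ (q + 1) / q * ‖z‖ + s := by
    have : ‖z‖ ≤ (q + 1) / q * ‖z‖ := le_mul_of_one_le_left (norm_nonneg z)
      ((one_le_div hq).mpr (by linarith))
    linarith [Complex.norm_sq_le_of_sq_eq_sub_ofReal h₁ hs]
  have hR₂ : ‖σ₂‖ ^ 2 ≤ (q + 1) / q * ‖z‖ + s := by
    have := Complex.norm_sq_le_of_sq_eq_sub_ofReal h₂ hs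
    rwa [norm_mul, norm_real, Real.norm_of_nonneg (by positivity)] at this
  rw [norm_sub_sq_div_norm_mul_eq hdiff hz, norm_real, Real.norm_of_nonneg hq.le]
  have hpos : 0 < 4 * q ^ 2 * ‖σ₁ + σ₂‖ ^ 2 * (‖σ₁‖ * ‖σ₂‖) := by
    have := norm_pos_iff.mpr hsum
    have := norm_pos_iff.mpr hσ₁
    have := norm_pos_iff.mpr hσ₂
    positivity
  refine one_div_le_one_div_of_le hpos ?_
  calc 4 * q ^ 2 * ‖σ₁ + σ₂‖ ^ 2 * (‖σ₁‖ * ‖σ₂‖)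
      = 4 * q ^ 2 * (‖σ₁ + σ₂‖ ^ 2 * (‖σ₁‖ * ‖σ₂‖)) := by ring
    _ ≤ 4 * q ^ 2 * (4 * ((q + 1) / q * ‖z‖ + s) ^ 2) :=
        mul_le_mul_of_nonneg_left (norm_add_sq_mul_norm_mul_norm_le hR₁ hR₂) (by positivity)
    _ = 16 * q ^ 2 * ((q + 1) / q * ‖z‖ + s) ^ 2 := by ring

/-- Ellipticity of the boundary symbol: for `|z| ≤ C₀`, `Im z ≥ h^{δ/2}`,
`q ∈ [qmin, qmax]`, `s ≥ 0` and roots `σ₁ = √(z−s)`, `σ₂ = √(((q+1)/q)z−s)` with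
positive imaginary parts, there is `C > 0` depending only on `C₀, qmin, qmax` such
that `|det a| = |σ₂−σ₁|²/|t₀'(σ₁)t₀'(σ₂)|` (with `t₀'(σ₁) = −2σ₁z`,
`t₀'(σ₂) = 2σ₂z`) satisfies `|det a| ≥ (1/C)(1+s)⁻²` for `s ≥ 2(1+1/qmin)C₀` and
`|det a| ≥ 1/C` for `s ≤ 2(1+1/qmin)C₀`. -/
theorem boundary_symbol_ellipticity (C₀ qmin qmax : ℝ) (hC₀ : 0 < C₀) (hqmin : 0 < qmin)
    (hq : qmin ≤ qmax) :
    ∃ C : ℝ, 0 < C ∧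
      ∀ (δ h : ℝ) (z : ℂ) (q s : ℝ) (σ₁ σ₂ : ℂ),
        0 ≤ δ → δ < 1 / 2 → 0 < h → h ≤ 1 →
        ‖z‖ ≤ C₀ → h ^ (δ / 2) ≤ z.im →
        qmin ≤ q → q ≤ qmax → 0 ≤ s →
        σ₁ ^ 2 = z - (s : ℂ) → σ₂ ^ 2 = ((q + 1) / q : ℝ) * z - (s : ℂ) →
        0 < σ₁.im → 0 < σ₂.im →
        (2 * (1 + 1 / qmin) * C₀ ≤ s →
          1 / C * ((1 + s) ^ 2)⁻¹
            ≤ ‖σ₂ - σ₁‖ ^ 2 / ‖(-2 * σ₁ * z) * (2 * σ₂ * z)‖)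
        ∧ (s ≤ 2 * (1 + 1 / qmin) * C₀ →
          1 / C ≤ ‖σ₂ - σ₁‖ ^ 2 / ‖(-2 * σ₁ * z) * (2 * σ₂ * z)‖) := by
  set K := (1 + 1 / qmin) * C₀
  have hK : 0 < K := by positivity
  have hqmax : 0 < qmax := hqmin.trans_le hq
  refine ⟨16 * qmax ^ 2 * (1 + 3 * K) ^ 2, by positivity, ?_⟩
  intro δ h z q s σ₁ σ₂ _ _ hh _ hzC hzim hqmin_le hq_le hs h₁ h₂ hσ₁ hσ₂
  have ne_zero_of_im_pos (w : ℂ) (hw : 0 < w.im) : w ≠ 0 := fun h0 => by simp [h0] at hw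
  have hq0 : 0 < q := hqmin.trans_le hqmin_le
  have hz : z ≠ 0 := ne_zero_of_im_pos z ((Real.rpow_pos_of_pos hh _).trans_le hzim)
  have hdet := boundary_det_lower_bound hq0 hs hz (ne_zero_of_im_pos _ hσ₁) (ne_zero_of_im_pos _ hσ₂) h₁ h₂
  have hcoef : (q + 1) / q * ‖z‖ ≤ K := by
    rw [add_div, div_self hq0.ne']
    exact mul_le_mul (by gcongr) hzC (norm_nonneg z) (by positivity)
  have hbound (B : ℝ) (hB : K + s ≤ B) :
      1 / (16 * qmax ^ 2 * B ^ 2) ≤ ‖σ₂ - σ₁‖ ^ 2 / ‖(-2 * σ₁ * z) * (2 * σ₂ * z)‖ := by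
    have := norm_pos_iff.mpr hz
    refine le_trans (one_div_le_one_div_of_le (by positivity) ?_) hdet
    gcongr
    linarith
  constructor
  · intro _
    calc 1 / (16 * qmax ^ 2 * (1 + 3 * K) ^ 2) * ((1 + s) ^ 2)⁻¹
        = 1 / (16 * qmax ^ 2 * ((1 + 3 * K) * (1 + s)) ^ 2) := by field_simp
      _ ≤ _ := hbound _ (by nlinarith)
  · intro hs'
    exact hbound _ (by linarith)
end
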